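/- Let G be a graph, let L(G) be the set of loopless leaves of G (vertices of degree one without a loop), let ℓ ∈ L(G) with unique neighbour w, and let G' be the graph obtained from G by deleting all edges {w, v'} with v' ∈ N_G(w) (and discarding resulting isolated vertices). Then st_+(G) = st_+(G') + 2, and every optimal set-join cover 𝒞 of G contains a set-join {w} ∨ N, where N_G(w) ∩ L(G) ⊆ N ⊆ N_G(w). -/

import Mathlib

open Matrix

/-- A finite simple undirected graph that allows loops: a symmetric adjacency
relation on the vertex type. -/
structure LGraph (V : Type*) where
  /-- the adjacency relation; `Adj v v` means a loop at `v`. -/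
  Adj : V → V → Prop
  /-- adjacency is symmetric -/
  symm : ∀ {u v : V}, Adj u v → Adj v u

namespace LGraph

variable {V W : Type*}

/-- `𝒞` is a set-join cover of `G`: all components are nonempty subsets of the
vertex set, and the union of the edge sets of the set-joins `K ∨ L` in `𝒞` is
exactly the edge set of `G`. A set-join is represented as an unordered pair
`s(K, L)` of subsets of the vertex set. -/
def IsSetJoinCover (G : LGraph V) (𝒞 : Set (Sym2 (Set V))) : Prop :=
  (∀ p ∈ 𝒞, ∀ K ∈ p, (K : Set V).Nonempty) ∧
    ∀ u v : V, G.Adj u v ↔ ∃ p ∈ 𝒞, ∃ K L : Set V, p = s(K, L) ∧ u ∈ K ∧ v ∈ L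

/-- The component set `V(𝒞)` of a set-join cover: all subsets of the vertex set
appearing as a component of some set-join in `𝒞`. -/
def comps (𝒞 : Set (Sym2 (Set V))) : Set (Set V) :=
  {K : Set V | ∃ p ∈ 𝒞, K ∈ p}

/-- The order `|𝒞|` of a set-join cover: the number of its components. -/
noncomputable def coverOrder (𝒞 : Set (Sym2 (Set V))) : ℕ :=
  (comps 𝒞).ncard

/-- The SNT-rank `st₊(G)` of a graph: the minimal order of a set-join cover of `G`. -/
noncomputable def st (G : LGraph V) : ℕ :=
  sInf {k : ℕ | ∃ 𝒞 : Set (Sym2 (Set V)), G.IsSetJoinCover 𝒞 ∧ coverOrder 𝒞 = k}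

/-- An optimal set-join cover (OSJ cover): a set-join cover of order `st₊(G)`. -/
def IsOptimalCover (G : LGraph V) (𝒞 : Set (Sym2 (Set V))) : Prop :=
  G.IsSetJoinCover 𝒞 ∧ coverOrder 𝒞 = G.st

/-- The graph `G(𝒞)` of a set-join cover: vertices are the components, and two
components `K`, `L` are adjacent iff the set-join `K ∨ L` belongs to `𝒞`. -/
def coverGraph (𝒞 : Set (Sym2 (Set V))) : LGraph (comps 𝒞) where
  Adj K L := s((K : Set V), (L : Set V)) ∈ 𝒞
  symm := by
    intro K L h
    rwa [Sym2.eq_swap] at h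

/-- The neighbourhood of a vertex (`v ∈ neighborSet v` iff `v` has a loop). -/
def neighborSet (G : LGraph V) (v : V) : Set V := {w | G.Adj v w}

/-- The induced subgraph on a set of vertices. -/
def induce (G : LGraph V) (S : Set V) : LGraph S where
  Adj a b := G.Adj (a : V) (b : V)
  symm := by intro a b h; exact G.symm h

/-- Adjacency for the disjoint union of two graphs. -/
def disjUnionAdj (G : LGraph V) (H : LGraph W) : V ⊕ W → V ⊕ W → Prop
  | Sum.inl a, Sum.inl b => G.Adj a b
  | Sum.inr a, Sum.inr b => H.Adj a b
  | _, _ => False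

/-- The disjoint union `G ∪ H` of two graphs. -/
def disjUnion (G : LGraph V) (H : LGraph W) : LGraph (V ⊕ W) where
  Adj := disjUnionAdj G H
  symm := by
    rintro (a | a) (b | b) h
    · exact G.symm h
    · exact h.elim
    · exact h.elim
    · exact H.symm h

/-- The graph with no edges on vertex type `V`. -/
def emptyGraph (V : Type*) : LGraph V where
  Adj _ _ := False
  symm := by intro u v h; exact h

/-- Adjacency for the join of a graph with a single looped vertex `none`. -/
def joinK1ℓAdj (G : LGraph V) : Option V → Option V → Prop
  | some a, some b => G.Adj a b
  | _, _ => True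

/-- The join `G ∨ K₁ˡ` of `G` with a single looped vertex (the vertex `none`). -/
def joinK1ℓ (G : LGraph V) : LGraph (Option V) where
  Adj := joinK1ℓAdj G
  symm := by
    rintro (_ | a) (_ | b) h
    · trivial
    · trivial
    · trivial
    · exact G.symm h

/-- The complete loopless graph `Kₙ` on `Fin n`. -/
def completeGraph (n : ℕ) : LGraph (Fin n) where
  Adj i j := i ≠ j
  symm := by intro i j h; exact h.symm

/-- The path `Pₙ` on `n` vertices (no loops). -/
def pathGraph (n : ℕ) : LGraph (Fin n) where
  Adj i j := (i : ℕ) + 1 = (j : ℕ) ∨ (j : ℕ) + 1 = (i : ℕ)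
  symm := by intro i j h; exact h.symm

/-- The cycle `Cₙ` on `n` vertices (no loops), for `n ≥ 3`. -/
def cycleGraph (n : ℕ) : LGraph (Fin n) where
  Adj i j := ((i : ℕ) + 1) % n = (j : ℕ) ∨ ((j : ℕ) + 1) % n = (i : ℕ)
  symm := by intro i j h; exact h.symm

/-- Adjacency for the generalised star: the centre is `none`, and `some ⟨i, j⟩`
is the vertex at distance `j + 1` from the centre on arm `i`. -/
def genStarAdj (t : ℕ) (k : Fin t → ℕ) :
    Option ((i : Fin t) × Fin (k i)) → Option ((i : Fin t) × Fin (k i)) → Prop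
  | none, none => False
  | none, some ⟨_, j⟩ => (j : ℕ) = 0
  | some ⟨_, j⟩, none => (j : ℕ) = 0
  | some ⟨i, j⟩, some ⟨i', j'⟩ => i = i' ∧ ((j : ℕ) + 1 = (j' : ℕ) ∨ (j' : ℕ) + 1 = (j : ℕ))

/-- The generalised star `star(k₁, …, k_t)` with central vertex `none` and `t`
arms, the `i`-th arm being a path with `k i` edges emanating from the centre. -/
def genStar (t : ℕ) (k : Fin t → ℕ) : LGraph (Option ((i : Fin t) × Fin (k i))) where
  Adj := genStarAdj t k
  symm := by
    rintro (_ | ⟨i, j⟩) (_ | ⟨i', j'⟩) h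
    · exact h.elim
    · exact h
    · exact h
    · exact ⟨h.1.symm, h.2.symm⟩

/-- A loopless leaf: a vertex with exactly one neighbour and no loop. -/
def LooplessLeaf (G : LGraph V) (v : V) : Prop :=
  ¬ G.Adj v v ∧ ∃ w : V, G.neighborSet v = {w}

/-- Delete from `G` all edges incident to the vertex `w`. -/
def deleteVertexEdges (G : LGraph V) (w : V) : LGraph V where
  Adj u v := G.Adj u v ∧ u ≠ w ∧ v ≠ w
  symm := by intro u v h; exact ⟨G.symm h.1, h.2.2, h.2.1⟩

/-- A graph is twin-free if no two distinct vertices have the same neighbourhood. -/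
def TwinFree (G : LGraph V) : Prop :=
  ∀ u v : V, G.neighborSet u = G.neighborSet v → u = v

/-- `G` has a unique optimal set-join cover. -/
def HasUniqueOptimalCover (G : LGraph V) : Prop :=
  ∃! 𝒞 : Set (Sym2 (Set V)), G.IsSetJoinCover 𝒞 ∧ coverOrder 𝒞 = G.st

/-- The cover graphs of two set-join covers are isomorphic. -/
def CoverGraphIso (𝒞 : Set (Sym2 (Set V))) (𝒟 : Set (Sym2 (Set W))) : Prop :=
  ∃ e : comps 𝒞 ≃ comps 𝒟,
    ∀ K L : comps 𝒞, (coverGraph 𝒞).Adj K L ↔ (coverGraph 𝒟).Adj (e K) (e L)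

/-- All optimal set-join covers of `G` have isomorphic cover graphs. -/
def HasUniqueOSJCoverGraph (G : LGraph V) : Prop :=
  ∀ 𝒞 𝒟 : Set (Sym2 (Set V)),
    G.IsOptimalCover 𝒞 → G.IsOptimalCover 𝒟 → CoverGraphIso 𝒞 𝒟

/-- Entrywise nonnegativity of a real matrix. -/
def EntrywiseNonneg {m n : Type*} (A : Matrix m n ℝ) : Prop :=
  ∀ i j, 0 ≤ A i j

/-- The SNT-rank `st₊(A)` of a matrix: the minimal `k` such that `A = B * C * Bᵀ`
with `B` an entrywise nonnegative `n × k` matrix and `C` a symmetric entrywise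
nonnegative `k × k` matrix. -/
noncomputable def stM {V : Type*} [Fintype V] (A : Matrix V V ℝ) : ℕ :=
  sInf {k : ℕ | ∃ B : Matrix V (Fin k) ℝ, ∃ C : Matrix (Fin k) (Fin k) ℝ,
    EntrywiseNonneg B ∧ C.IsSymm ∧ EntrywiseNonneg C ∧ A = B * C * Bᵀ}

/-- The SNT-rank `st₊(G)` of a graph defined via matrices: the minimum of
`st₊(A)` over all symmetric entrywise nonnegative matrices `A` whose pattern
graph is `G`. -/
noncomputable def stMGraph {V : Type*} [Fintype V] (G : LGraph V) : ℕ :=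
  sInf {k : ℕ | ∃ A : Matrix V V ℝ, A.IsSymm ∧ EntrywiseNonneg A ∧
    (∀ i j, G.Adj i j ↔ 0 < A i j) ∧ stM A = k}

/-- The loopy graph associated with a simple graph. -/
def _root_.SimpleGraph.toLGraph (G : SimpleGraph V) : LGraph V where
  Adj := G.Adj
  symm := by intro u v h; exact G.adj_symm h

/-- The edge star cover number `starc(G)` of a loopless simple graph: the minimal
number of stars (given by a centre and a nonempty set of leaves not containing
the centre) whose edge sets have union exactly `E(G)`. -/
noncomputable def starCoverNumber (G : SimpleGraph V) : ℕ :=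
  sInf {k : ℕ | ∃ f : Fin k → V × Set V,
    (∀ i, (f i).2.Nonempty ∧ (f i).1 ∉ (f i).2) ∧
    ∀ u v : V, G.Adj u v ↔
      ∃ i, (u = (f i).1 ∧ v ∈ (f i).2) ∨ (v = (f i).1 ∧ u ∈ (f i).2)}

/-!
In any set-join cover, a vertex whose only neighbour is `w` occurs in exactly one set-join,
namely `K ∨ {w}` for its component `K`. Removing `w` from all components therefore gives a
cover of `G'` that has lost at least the two components `{w}` and `K_ℓ`, while adding the
single set-join `{w} ∨ N_G(w)` to a cover of `G'` gives a cover of `G`; hence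
`st₊(G) = st₊(G') + 2`. In an optimal cover the set-joins `K ∨ {w}` and `K' ∨ {w}` of two
leaves at `w` must coincide, since otherwise merging them into `(K ∪ K') ∨ {w}` would save a
component; so all leaves at `w` lie in the component `N` paired with `{w}`.
-/

lemma _root_.Set.ncard_diff_pair_add_two {α : Type*} {s : Set α} [Finite s] {a b : α}
    (hab : a ≠ b) (ha : a ∈ s) (hb : b ∈ s) : (s \ {a, b}).ncard + 2 = s.ncard := by
  have hsub : ({a, b} : Set α) ⊆ s := Set.insert_subset ha (Set.singleton_subset_iff.mpr hb)
  rw [Set.ncard_sdiff hsub, Set.ncard_pair hab,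
    Nat.sub_add_cancel (Set.ncard_pair hab ▸ Set.ncard_le_ncard hsub)]

def JoinAdj (p : Sym2 (Set V)) (u v : V) : Prop :=
  ∃ K L : Set V, p = s(K, L) ∧ u ∈ K ∧ v ∈ L

section JoinAdj

variable {K L M : Set V} {u v : V}

lemma joinAdj_mk : JoinAdj s(K, L) u v ↔ u ∈ K ∧ v ∈ L ∨ u ∈ L ∧ v ∈ K := by
  constructor
  · rintro ⟨K', L', h, hu, hv⟩
    rcases Sym2.eq_iff.mp h with ⟨rfl, rfl⟩ | ⟨rfl, rfl⟩
    exacts [Or.inl ⟨hu, hv⟩, Or.inr ⟨hu, hv⟩]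
  · rintro (⟨hu, hv⟩ | ⟨hu, hv⟩)
    exacts [⟨K, L, rfl, hu, hv⟩, ⟨L, K, Sym2.eq_swap, hu, hv⟩]

lemma joinAdj_union_left {K₁ K₂ : Set V} :
    JoinAdj s(K₁ ∪ K₂, M) u v ↔ JoinAdj s(K₁, M) u v ∨ JoinAdj s(K₂, M) u v := by
  simp only [joinAdj_mk, Set.mem_union]
  tauto

lemma joinAdj_map_diff_singleton {p : Sym2 (Set V)} {w : V} :
    JoinAdj (p.map (· \ {w})) u v ↔ JoinAdj p u v ∧ u ≠ w ∧ v ≠ w := by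
  induction p using Sym2.ind with
  | h K L =>
    simp only [Sym2.map_mk, joinAdj_mk, Set.mem_sdiff, Set.mem_singleton_iff]
    tauto

lemma JoinAdj.mem_or_mem {p : Sym2 (Set V)} (h : JoinAdj p u v) (hK : K ∈ p) :
    u ∈ K ∨ v ∈ K := by
  obtain ⟨K', L', rfl, hu, hv⟩ := h
  rcases Sym2.mem_iff.mp hK with rfl | rfl
  exacts [Or.inl hu, Or.inr hv]

end JoinAdj

lemma isSetJoinCover_iff {G : LGraph V} {𝒞 : Set (Sym2 (Set V))} :
    G.IsSetJoinCover 𝒞 ↔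
      (∀ p ∈ 𝒞, ∀ K ∈ p, K.Nonempty) ∧ ∀ u v, G.Adj u v ↔ ∃ p ∈ 𝒞, JoinAdj p u v :=
  Iff.rfl

section Cover

variable {G : LGraph V} {𝒞 : Set (Sym2 (Set V))}

lemma mem_comps {p : Sym2 (Set V)} (hp : p ∈ 𝒞) {K : Set V} (hK : K ∈ p) : K ∈ comps 𝒞 :=
  ⟨p, hp, hK⟩

lemma IsSetJoinCover.adj (h : G.IsSetJoinCover 𝒞) {K L : Set V} (hKL : s(K, L) ∈ 𝒞)
    {u v : V} (hu : u ∈ K) (hv : v ∈ L) : G.Adj u v :=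
  (h.2 u v).mpr ⟨_, hKL, K, L, rfl, hu, hv⟩

lemma exists_isSetJoinCover (G : LGraph V) : ∃ 𝒞, G.IsSetJoinCover 𝒞 := by
  refine ⟨{p | ∃ a b, G.Adj a b ∧ p = s({a}, {b})}, ?_, fun u v => ⟨?_, ?_⟩⟩
  · rintro p ⟨a, b, -, rfl⟩ K hK
    rcases Sym2.mem_iff.mp hK with rfl | rfl
    exacts [Set.singleton_nonempty a, Set.singleton_nonempty b]
  · exact fun h => ⟨_, ⟨u, v, h, rfl⟩, {u}, {v}, rfl, rfl, rfl⟩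
  · rintro ⟨p, ⟨a, b, hab, rfl⟩, hp⟩
    rcases joinAdj_mk.mp hp with ⟨rfl, rfl⟩ | ⟨rfl, rfl⟩
    exacts [hab, G.symm hab]

lemma exists_isOptimalCover (G : LGraph V) : ∃ 𝒞, G.IsOptimalCover 𝒞 := by
  obtain ⟨𝒞, h𝒞⟩ := exists_isSetJoinCover G
  obtain ⟨𝒟, h𝒟, hord⟩ : G.st ∈ {k | ∃ 𝒞, G.IsSetJoinCover 𝒞 ∧ coverOrder 𝒞 = k} :=
    Nat.sInf_mem ⟨_, 𝒞, h𝒞, rfl⟩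
  exact ⟨𝒟, h𝒟, hord⟩

lemma st_le_coverOrder (h : G.IsSetJoinCover 𝒞) : G.st ≤ coverOrder 𝒞 :=
  Nat.sInf_le ⟨𝒞, h, rfl⟩

lemma coverOrder_insert_le [Finite V] (K L : Set V) (𝒞 : Set (Sym2 (Set V))) :
    coverOrder (insert s(K, L) 𝒞) ≤ coverOrder 𝒞 + 2 := by
  have hsub : comps (insert s(K, L) 𝒞) ⊆ insert K (insert L (comps 𝒞)) := by
    rintro A ⟨p, rfl | hp, hA⟩
    · rcases Sym2.mem_iff.mp hA with rfl | rfl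
      exacts [Or.inl rfl, Or.inr (Or.inl rfl)]
    · exact Or.inr (Or.inr (mem_comps hp hA))
  calc coverOrder (insert s(K, L) 𝒞) ≤ (insert K (insert L (comps 𝒞))).ncard :=
        Set.ncard_le_ncard hsub (Set.toFinite _)
    _ ≤ (insert L (comps 𝒞)).ncard + 1 := Set.ncard_insert_le _ _
    _ ≤ coverOrder 𝒞 + 2 := Nat.add_le_add_right (Set.ncard_insert_le L (comps 𝒞)) 1

end Cover

def mergeJoins (𝒞 : Set (Sym2 (Set V))) (K₁ K₂ M : Set V) : Set (Sym2 (Set V)) :=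
  insert s(K₁ ∪ K₂, M) (𝒞 \ {s(K₁, M), s(K₂, M)})

def deleteVertexJoins (𝒞 : Set (Sym2 (Set V))) (w : V) : Set (Sym2 (Set V)) :=
  {q | ∃ p ∈ 𝒞, (∀ K ∈ p, (K \ {w}).Nonempty) ∧ q = p.map (· \ {w})}

section Operations

variable {G : LGraph V} {𝒞 : Set (Sym2 (Set V))}

lemma IsSetJoinCover.mergeJoins (h : G.IsSetJoinCover 𝒞) {K₁ K₂ M : Set V}
    (h₁ : s(K₁, M) ∈ 𝒞) (h₂ : s(K₂, M) ∈ 𝒞) : G.IsSetJoinCover (mergeJoins 𝒞 K₁ K₂ M) := by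
  rw [isSetJoinCover_iff] at h ⊢
  refine ⟨?_, fun u v => (h.2 u v).trans ⟨?_, ?_⟩⟩
  · rintro p (rfl | ⟨hp, -⟩) K hK
    · rcases Sym2.mem_iff.mp hK with rfl | rfl
      · exact (h.1 _ h₁ K₁ (Sym2.mem_mk_left _ _)).mono Set.subset_union_left
      · exact h.1 _ h₁ _ (Sym2.mem_mk_right _ _)
    · exact h.1 p hp K hK
  · rintro ⟨p, hp, hpuv⟩
    by_cases hp' : p ∈ ({s(K₁, M), s(K₂, M)} : Set (Sym2 (Set V)))
    · refine ⟨_, Set.mem_insert _ _, joinAdj_union_left.mpr ?_⟩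
      rcases hp' with rfl | rfl
      exacts [Or.inl hpuv, Or.inr hpuv]
    · exact ⟨p, Or.inr ⟨hp, hp'⟩, hpuv⟩
  · rintro ⟨p, rfl | ⟨hp, -⟩, hpuv⟩
    · rcases joinAdj_union_left.mp hpuv with h' | h'
      exacts [⟨_, h₁, h'⟩, ⟨_, h₂, h'⟩]
    · exact ⟨p, hp, hpuv⟩

lemma coverOrder_mergeJoins_lt [Finite V] {K₁ K₂ M : Set V} (hne : K₁ ≠ K₂)
    (h₁ : s(K₁, M) ∈ 𝒞) (h₂ : s(K₂, M) ∈ 𝒞)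
    (hK₁ : ∀ p ∈ 𝒞, K₁ ∈ p → p = s(K₁, M)) (hK₂ : ∀ p ∈ 𝒞, K₂ ∈ p → p = s(K₂, M)) :
    coverOrder (mergeJoins 𝒞 K₁ K₂ M) < coverOrder 𝒞 := by
  have hM₁ : M ≠ K₁ := fun hM =>
    hne (Sym2.congr_left.mp (hK₁ _ h₂ (hM ▸ Sym2.mem_mk_right _ _))).symm
  have hM₂ : M ≠ K₂ := fun hM =>
    hne (Sym2.congr_left.mp (hK₂ _ h₁ (hM ▸ Sym2.mem_mk_right _ _)))
  have hsub : comps (mergeJoins 𝒞 K₁ K₂ M) ⊆ insert (K₁ ∪ K₂) (comps 𝒞 \ {K₁, K₂}) := by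
    rintro A ⟨p, rfl | ⟨hp, hp'⟩, hA⟩
    · rcases Sym2.mem_iff.mp hA with rfl | rfl
      · exact Or.inl rfl
      · refine Or.inr ⟨mem_comps h₁ (Sym2.mem_mk_right _ _), ?_⟩
        rintro (h | h)
        exacts [hM₁ h, hM₂ h]
    · refine Or.inr ⟨mem_comps hp hA, ?_⟩
      rintro (rfl | rfl)
      exacts [hp' (Or.inl (hK₁ p hp hA)), hp' (Or.inr (hK₂ p hp hA))]
  have hcount := Set.ncard_diff_pair_add_two hne (mem_comps h₁ (Sym2.mem_mk_left _ _))
    (mem_comps h₂ (Sym2.mem_mk_left _ _))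
  calc coverOrder (mergeJoins 𝒞 K₁ K₂ M)
      ≤ (insert (K₁ ∪ K₂) (comps 𝒞 \ {K₁, K₂})).ncard :=
        Set.ncard_le_ncard hsub (Set.toFinite _)
    _ ≤ (comps 𝒞 \ {K₁, K₂}).ncard + 1 := Set.ncard_insert_le _ _
    _ < coverOrder 𝒞 := by unfold coverOrder; omega

lemma IsSetJoinCover.deleteVertexJoins (h : G.IsSetJoinCover 𝒞) (w : V) :
    (deleteVertexEdges G w).IsSetJoinCover (deleteVertexJoins 𝒞 w) := by
  rw [isSetJoinCover_iff] at h ⊢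
  refine ⟨?_, fun u v => ⟨?_, ?_⟩⟩
  · rintro q ⟨p, -, hne, rfl⟩ K hK
    obtain ⟨K', hK', rfl⟩ := Sym2.mem_map.mp hK
    exact hne K' hK'
  · rintro ⟨huv, hu, hv⟩
    obtain ⟨p, hp, hpuv⟩ := (h.2 u v).mp huv
    refine ⟨_, ⟨p, hp, fun K hK => ?_, rfl⟩, joinAdj_map_diff_singleton.mpr ⟨hpuv, hu, hv⟩⟩
    rcases hpuv.mem_or_mem hK with hK | hK
    exacts [⟨u, hK, hu⟩, ⟨v, hK, hv⟩]
  · rintro ⟨q, ⟨p, hp, -, rfl⟩, hquv⟩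
    obtain ⟨hpuv, hu, hv⟩ := joinAdj_map_diff_singleton.mp hquv
    exact ⟨(h.2 u v).mpr ⟨p, hp, hpuv⟩, hu, hv⟩

lemma IsSetJoinCover.insert_star {w : V} (h : (deleteVertexEdges G w).IsSetJoinCover 𝒞)
    (hw : (G.neighborSet w).Nonempty) :
    G.IsSetJoinCover (insert s({w}, G.neighborSet w) 𝒞) := by
  rw [isSetJoinCover_iff] at h ⊢
  refine ⟨?_, fun u v => ⟨fun huv => ?_, ?_⟩⟩
  · rintro p (rfl | hp) K hK
    · rcases Sym2.mem_iff.mp hK with rfl | rfl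
      exacts [Set.singleton_nonempty w, hw]
    · exact h.1 p hp K hK
  · obtain rfl | hu := eq_or_ne u w
    · exact ⟨_, Set.mem_insert _ _, joinAdj_mk.mpr (Or.inl ⟨rfl, huv⟩)⟩
    obtain rfl | hv := eq_or_ne v w
    · exact ⟨_, Set.mem_insert _ _, joinAdj_mk.mpr (Or.inr ⟨G.symm huv, rfl⟩)⟩
    obtain ⟨p, hp, hpuv⟩ := (h.2 u v).mp ⟨huv, hu, hv⟩
    exact ⟨p, Or.inr hp, hpuv⟩
  · rintro ⟨p, rfl | hp, hpuv⟩
    · rcases joinAdj_mk.mp hpuv with ⟨rfl, hv⟩ | ⟨hu, rfl⟩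
      exacts [hv, G.symm hu]
    · exact ((h.2 u v).mpr ⟨p, hp, hpuv⟩).1

end Operations

section Leaves

variable {G : LGraph V} {𝒞 : Set (Sym2 (Set V))} {v w : V}

lemma LooplessLeaf.ne_of_adj (hv : LooplessLeaf G v) (h : G.Adj v w) : v ≠ w := by
  rintro rfl
  exact hv.1 h

lemma LooplessLeaf.neighborSet_eq (hv : LooplessLeaf G v) (h : G.Adj w v) :
    G.neighborSet v = {w} := by
  obtain ⟨-, w', hw'⟩ := hv
  have hw : w ∈ G.neighborSet v := G.symm h
  rw [hw', Set.mem_singleton_iff] at hw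
  rw [hw', hw]

lemma IsSetJoinCover.eq_of_mem_of_neighborSet_eq (h : G.IsSetJoinCover 𝒞)
    (hv : G.neighborSet v = {w}) {K : Set V} (hvK : v ∈ K) {p : Sym2 (Set V)} (hp : p ∈ 𝒞)
    (hKp : K ∈ p) : p = s(K, {w}) := by
  obtain ⟨L, rfl⟩ := Sym2.mem_iff_exists.mp hKp
  have hL : L ⊆ {w} := fun x hx => hv ▸ h.adj hp hvK hx
  rw [(h.1 _ hp L (Sym2.mem_mk_right _ _)).subset_singleton_iff.mp hL]

lemma IsSetJoinCover.exists_join_singleton_of_neighborSet_eq (h : G.IsSetJoinCover 𝒞)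
    (hv : G.neighborSet v = {w}) : ∃ K, v ∈ K ∧ s(K, {w}) ∈ 𝒞 := by
  have hvw : w ∈ G.neighborSet v := hv ▸ Set.mem_singleton w
  obtain ⟨p, hp, K, L, rfl, hvK, -⟩ := (h.2 v w).mp hvw
  exact ⟨K, hvK, h.eq_of_mem_of_neighborSet_eq hv hvK hp (Sym2.mem_mk_left _ _) ▸ hp⟩

lemma IsSetJoinCover.subset_neighborSet (h : G.IsSetJoinCover 𝒞) {K : Set V}
    (hK : s(K, {w}) ∈ 𝒞) : K ⊆ G.neighborSet w :=
  fun _ hu => G.symm (h.adj hK hu rfl)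

lemma IsOptimalCover.eq_of_neighborSet_eq [Finite V] (h : G.IsOptimalCover 𝒞) {v₁ v₂ : V}
    (hv₁ : G.neighborSet v₁ = {w}) (hv₂ : G.neighborSet v₂ = {w}) {K₁ K₂ : Set V}
    (h₁ : v₁ ∈ K₁) (h₂ : v₂ ∈ K₂) (hK₁ : s(K₁, {w}) ∈ 𝒞) (hK₂ : s(K₂, {w}) ∈ 𝒞) :
    K₁ = K₂ := by
  by_contra hne
  have hlt := coverOrder_mergeJoins_lt hne hK₁ hK₂
    (fun _ hp => h.1.eq_of_mem_of_neighborSet_eq hv₁ h₁ hp)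
    (fun _ hp => h.1.eq_of_mem_of_neighborSet_eq hv₂ h₂ hp)
  have hle := st_le_coverOrder (h.1.mergeJoins hK₁ hK₂)
  rw [h.2] at hlt
  omega

lemma coverOrder_deleteVertexJoins_add_two_le [Finite V] (h : G.IsSetJoinCover 𝒞) {ℓ : V}
    (hℓ : G.neighborSet ℓ = {w}) (hℓw : ℓ ≠ w) :
    coverOrder (deleteVertexJoins 𝒞 w) + 2 ≤ coverOrder 𝒞 := by
  obtain ⟨Kℓ, hℓK, hKℓ⟩ := h.exists_join_singleton_of_neighborSet_eq hℓ
  have hsub : comps (deleteVertexJoins 𝒞 w) ⊆ (· \ {w}) '' (comps 𝒞 \ {{w}, Kℓ}) := by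
    rintro A ⟨q, ⟨p, hp, hne, rfl⟩, hA⟩
    obtain ⟨K, hK, rfl⟩ := Sym2.mem_map.mp hA
    refine ⟨K, ⟨mem_comps hp hK, ?_⟩, rfl⟩
    rintro (rfl | rfl)
    · simpa using hne _ hK
    · obtain rfl := h.eq_of_mem_of_neighborSet_eq hℓ hℓK hp hK
      simpa using hne {w} (Sym2.mem_mk_right _ _)
  have hwK : ({w} : Set V) ≠ Kℓ := by
    rintro rfl
    exact hℓw hℓK
  have hcount := Set.ncard_diff_pair_add_two hwK (mem_comps hKℓ (Sym2.mem_mk_right _ _))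
    (mem_comps hKℓ (Sym2.mem_mk_left _ _))
  calc coverOrder (deleteVertexJoins 𝒞 w) + 2
      ≤ ((· \ {w}) '' (comps 𝒞 \ {{w}, Kℓ})).ncard + 2 :=
        Nat.add_le_add_right (Set.ncard_le_ncard hsub (Set.toFinite _)) 2
    _ ≤ (comps 𝒞 \ {{w}, Kℓ}).ncard + 2 :=
        Nat.add_le_add_right (Set.ncard_image_le (Set.toFinite _)) 2
    _ = coverOrder 𝒞 := hcount

end Leaves

/-- Let `ℓ` be a loopless leaf of `G` with unique neighbour `w`, and
let `G'` be obtained from `G` by deleting all edges incident to `w`. Then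
`st₊(G) = st₊(G') + 2`, and every optimal set-join cover of `G` contains a set-join
`{w} ∨ N` with `N_G(w) ∩ L(G) ⊆ N ⊆ N_G(w)`, where `L(G)` is the set of loopless
leaves of `G`. -/
theorem st_deleteVertexEdges_of_leaf {V : Type*} [Fintype V] (G : LGraph V)
    (ℓ w : V) (hleaf : LooplessLeaf G ℓ) (hnbhd : G.neighborSet ℓ = {w}) :
    G.st = (deleteVertexEdges G w).st + 2 ∧
    ∀ 𝒞 : Set (Sym2 (Set V)), G.IsOptimalCover 𝒞 →
      ∃ N : Set V, G.neighborSet w ∩ {v : V | LooplessLeaf G v} ⊆ N ∧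
        N ⊆ G.neighborSet w ∧ s(({w} : Set V), N) ∈ 𝒞 := by
  have hadj : G.Adj ℓ w := (hnbhd ▸ Set.mem_singleton w : w ∈ G.neighborSet ℓ)
  have hℓw : ℓ ≠ w := hleaf.ne_of_adj hadj
  refine ⟨le_antisymm ?_ ?_, fun 𝒞 h𝒞 => ?_⟩
  · obtain ⟨𝒟, h𝒟, hord⟩ := exists_isOptimalCover (deleteVertexEdges G w)
    calc G.st ≤ coverOrder (insert s({w}, G.neighborSet w) 𝒟) :=
          st_le_coverOrder (h𝒟.insert_star ⟨ℓ, G.symm hadj⟩)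
      _ ≤ (deleteVertexEdges G w).st + 2 := hord ▸ coverOrder_insert_le _ _ _
  · obtain ⟨𝒞, h𝒞, hord⟩ := exists_isOptimalCover G
    calc (deleteVertexEdges G w).st + 2 ≤ coverOrder (deleteVertexJoins 𝒞 w) + 2 := by
          gcongr; exact st_le_coverOrder (h𝒞.deleteVertexJoins w)
      _ ≤ G.st := hord ▸ coverOrder_deleteVertexJoins_add_two_le h𝒞 hnbhd hℓw
  · obtain ⟨N, hℓN, hN⟩ := h𝒞.1.exists_join_singleton_of_neighborSet_eq hnbhd
    refine ⟨N, fun v ⟨hwv, hv⟩ => ?_, h𝒞.1.subset_neighborSet hN, Sym2.eq_swap ▸ hN⟩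
    have hvw : G.neighborSet v = {w} := hv.neighborSet_eq hwv
    obtain ⟨K, hvK, hK⟩ := h𝒞.1.exists_join_singleton_of_neighborSet_eq hvw
    exact h𝒞.eq_of_neighborSet_eq hvw hnbhd hvK hℓN hK hN ▸ hvK

end LGraph
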